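/- Let S be a finite semigroup in which all idempotents are central and such that for every idempotent e ∈ S and every a ∈ S with ea = a, the subsemigroup ⟨a⟩ generated by a is a group. Let k ≥ 1 be such that x^k is idempotent for every x ∈ S, and set C := { x^{k+1} : x ∈ S }. Then C is an ideal of S (xcy ∈ C for all c ∈ C and x, y ∈ S ∪ {1}), and C is a Clifford semigroup. -/
import Mathlib


/-- Product of a nonempty list of semigroup elements: `a * l₁ * l₂ * ⋯`. -/
def sgProd {S : Type*} [Semigroup S] (a : S) (l : List S) : S :=
  l.foldl (· * ·) a

/-- `spow a m = a ^ m` for `m ≥ 1` (with junk value `a` at `m = 0`). -/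
def spow {S : Type*} [Semigroup S] (a : S) : ℕ → S
  | 0 => a
  | 1 => a
  | (n + 2) => spow a (n + 1) * a

/-- A (two-sided) ideal of a semigroup: a nonempty subset absorbing
multiplication on both sides. -/
def IsIdeal {S : Type*} [Semigroup S] (I : Set S) : Prop :=
  I.Nonempty ∧ ∀ s : S, ∀ x ∈ I, s * x ∈ I ∧ x * s ∈ I

/-- A subset of a semigroup that is a subsemigroup which is a group. -/
def IsGroupSubset {S : Type*} [Semigroup S] (G : Set S) : Prop :=
  (∀ x ∈ G, ∀ y ∈ G, x * y ∈ G) ∧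
    ∃ e ∈ G, (∀ x ∈ G, e * x = x ∧ x * e = x) ∧
      ∀ x ∈ G, ∃ y ∈ G, x * y = e ∧ y * x = e

/-- A subset of a semigroup that is a Clifford semigroup in its own right:
it is closed under multiplication, completely regular (every element lies in a
subsemigroup which is a group), and its idempotents are central in it. -/
def IsCliffordSubset {S : Type*} [Semigroup S] (C : Set S) : Prop :=
  (∀ x ∈ C, ∀ y ∈ C, x * y ∈ C) ∧
    (∀ x ∈ C, ∃ G ⊆ C, IsGroupSubset G ∧ x ∈ G) ∧
    (∀ e ∈ C, e * e = e → ∀ s ∈ C, e * s = s * e)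

/-- A semigroup is a Clifford semigroup. -/
def IsCliffordSG (C : Type*) [Semigroup C] : Prop :=
  IsCliffordSubset (Set.univ : Set C)

/-- A semigroup is nilpotent: for some `d`, any two products of at least `d`
elements are equal. -/
def IsNilpotentSG (N : Type*) [Semigroup N] : Prop :=
  ∃ d : ℕ, ∀ (a b : N) (l l' : List N),
    d ≤ l.length + 1 → d ≤ l'.length + 1 → sgProd a l = sgProd b l'

lemma spow_one {S : Type*} [Semigroup S] (a : S) : spow a 1 = a := rfl

lemma spow_succ {S : Type*} [Semigroup S] (a : S) (m : ℕ) (hm : 1 ≤ m) :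
    spow a (m + 1) = spow a m * a := by
  obtain ⟨m', rfl⟩ : ∃ m', m = m' + 1 := ⟨m - 1, by omega⟩
  rfl

lemma spow_add {S : Type*} [Semigroup S] (a : S) (m n : ℕ) (hm : 1 ≤ m) (hn : 1 ≤ n) :
    spow a (m + n) = spow a m * spow a n := by
  induction n with
  | zero => omega
  | succ n ih =>
    rcases Nat.lt_or_ge n 1 with h | h
    · interval_cases n
      rw [spow_succ a m hm, spow_one]
    · rw [← Nat.add_assoc, spow_succ a (m + n) (by omega), ih h,
        spow_succ a n h, mul_assoc]

lemma spow_spow {S : Type*} [Semigroup S] (a : S) (m n : ℕ) (hm : 1 ≤ m) (hn : 1 ≤ n) :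
    spow (spow a m) n = spow a (m * n) := by
  induction n with
  | zero => omega
  | succ n ih =>
    rcases Nat.lt_or_ge n 1 with h | h
    · interval_cases n
      simp [spow_one]
    · rw [spow_succ _ n h, ih h, Nat.mul_succ, spow_add a (m*n) m (by nlinarith) hm]

lemma spow_perT {S : Type*} [Semigroup S] {k : ℕ} (hk : 1 ≤ k) (a : S)
    (hik : spow a k * spow a k = spow a k) :
    ∀ (t j : ℕ), k ≤ j → spow a (j + t * k) = spow a j := by
  have step : ∀ j, k ≤ j → spow a (j + k) = spow a j := by
    intro j hj
    obtain ⟨r, rfl⟩ := Nat.exists_eq_add_of_le hj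
    cases r with
    | zero => simpa using by rw [spow_add a k k hk hk, hik]
    | succ r =>
      have h1 : k + (r + 1) + k = (k + k) + (r + 1) := by omega
      rw [h1, spow_add a (k+k) (r+1) (by omega) (by omega),
        spow_add a k k hk hk, hik, ← spow_add a k (r+1) hk (by omega)]
  intro t
  induction t with
  | zero => simp
  | succ t ih =>
    intro j hj
    have h1 : j + (t+1) * k = (j + t * k) + k := by ring
    rw [h1, step (j + t*k) (by omega), ih j hj]

/-- In a finite semigroup with central idempotents where `e * a = a`
(`e` idempotent) forces `⟨a⟩` to be a group, if `x ^ k` is idempotent for all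
`x` (`k ≥ 1`), then `C := { x ^ (k+1) : x ∈ S }` is an ideal of `S`
(in particular `x * c * y ∈ C` for `c ∈ C` and `x, y ∈ S ∪ {1}`) and `C` is a
Clifford semigroup. -/
theorem stmt5 {S : Type*} [Semigroup S] [Finite S] [Nonempty S]
    (hcen : ∀ e s : S, e * e = e → e * s = s * e)
    (hgrp : ∀ e a : S, e * e = e → e * a = a → ∃ m, 2 ≤ m ∧ a = spow a m)
    (k : ℕ) (hk : 1 ≤ k) (hik : ∀ x : S, spow x k * spow x k = spow x k) :
    IsIdeal {y : S | ∃ x : S, y = spow x (k + 1)} ∧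
    (∀ c ∈ {y : S | ∃ x : S, y = spow x (k + 1)}, ∀ x y : S,
      x * c * y ∈ {y : S | ∃ x : S, y = spow x (k + 1)}) ∧
    IsCliffordSubset {y : S | ∃ x : S, y = spow x (k + 1)} := by
  have perT : ∀ (a : S) (t j : ℕ), k ≤ j → spow a (j + t * k) = spow a j :=
    fun a => spow_perT hk a (hik a)
  -- any element fixed by left mult. by an idempotent lies in the "group part"
  have key : ∀ b e : S, e * e = e → e * b = b → b = spow b (k + 1) := by
    intro b e he heb
    obtain ⟨m, hm2, hbm⟩ := hgrp e b he heb
    obtain ⟨m₀, rfl⟩ : ∃ m₀, m = m₀ + 2 := ⟨m - 2, by omega⟩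
    have cyc : ∀ n : ℕ, b = spow b (1 + n * (m₀ + 1)) := by
      intro n
      induction n with
      | zero =>
        have h : 1 + 0 * (m₀ + 1) = 1 := by ring
        rw [h, spow_one]
      | succ n ih =>
        have h1 : 1 + (n + 1) * (m₀ + 1) = (1 + n * (m₀ + 1)) + (m₀ + 1) := by ring
        rw [h1, spow_add _ _ _ (by omega) (by omega), ← ih]
        have h2 : b * spow b (m₀ + 1) = spow b (m₀ + 2) := by
          have h3 : (m₀ : ℕ) + 2 = 1 + (m₀ + 1) := by omega
          rw [h3, spow_add b 1 (m₀ + 1) le_rfl (by omega), spow_one]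
        rw [h2]; exact hbm
    have h := cyc k
    have he2 : 1 + k * (m₀ + 1) = (k + 1) + m₀ * k := by ring
    rw [he2, perT b m₀ (k + 1) (by omega)] at h
    exact h
  have memC : ∀ b e : S, e * e = e → e * b = b →
      b ∈ {y : S | ∃ x : S, y = spow x (k + 1)} := by
    intro b e he heb
    exact ⟨b, key b e he heb⟩
  have hfix : ∀ c : S, c ∈ {y : S | ∃ x : S, y = spow x (k + 1)} →
      c = spow c (k + 1) := by
    rintro c ⟨x, rfl⟩
    rw [spow_spow x (k + 1) (k + 1) (by omega) (by omega)]
    have h : (k + 1) * (k + 1) = (k + 1) + (k + 1) * k := by ring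
    rw [h, perT x (k + 1) (k + 1) (by omega)]
  have hecl : ∀ c : S, c ∈ {y : S | ∃ x : S, y = spow x (k + 1)} →
      spow c k * c = c := by
    intro c hc
    calc spow c k * c = spow c k * spow c 1 := by rw [spow_one]
      _ = spow c (k + 1) := (spow_add c k 1 hk le_rfl).symm
      _ = c := (hfix c hc).symm
  have hleft : ∀ (s c : S), c ∈ {y : S | ∃ x : S, y = spow x (k + 1)} →
      s * c ∈ {y : S | ∃ x : S, y = spow x (k + 1)} := by
    intro s c hc
    refine memC _ (spow c k) (hik c) ?_
    calc spow c k * (s * c) = (spow c k * s) * c := (mul_assoc _ _ _).symm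
      _ = (s * spow c k) * c := by rw [hcen (spow c k) s (hik c)]
      _ = s * (spow c k * c) := mul_assoc _ _ _
      _ = s * c := by rw [hecl c hc]
  have hright : ∀ (s c : S), c ∈ {y : S | ∃ x : S, y = spow x (k + 1)} →
      c * s ∈ {y : S | ∃ x : S, y = spow x (k + 1)} := by
    intro s c hc
    refine memC _ (spow c k) (hik c) ?_
    calc spow c k * (c * s) = (spow c k * c) * s := (mul_assoc _ _ _).symm
      _ = c * s := by rw [hecl c hc]
  obtain ⟨x0⟩ := ‹Nonempty S›
  refine ⟨⟨⟨spow x0 (k + 1), x0, rfl⟩, fun s x hx => ⟨hleft s x hx, hright s x hx⟩⟩,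
    fun c hc x y => hright y _ (hleft x c hc), fun x hx y _ => hright y x hx, ?_,
    fun e _ hee s _ => hcen e s hee⟩
  -- complete regularity
  intro c hc
  have hc1 := hfix c hc
  have hcyc : ∀ n, 1 ≤ n → spow c (n + k) = spow c n := by
    intro n hn
    obtain ⟨n', rfl⟩ : ∃ n', n = n' + 1 := ⟨n - 1, by omega⟩
    have h1 : spow c ((n' + 1) + k) = spow c ((n' + 1 + k) + n' * k) :=
      (perT c n' (n' + 1 + k) (by omega)).symm
    rw [h1]
    have h2 : (n' + 1 + k) + n' * k = (k + 1) * (n' + 1) := by ring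
    rw [h2, ← spow_spow c (k + 1) (n' + 1) (by omega) (by omega), ← hc1]
  refine ⟨{y : S | ∃ n, 1 ≤ n ∧ y = spow c n}, ?_, ⟨?_, ?_⟩, ⟨1, le_rfl, (spow_one c).symm⟩⟩
  · rintro y ⟨n, hn, rfl⟩
    refine memC _ (spow c k) (hik c) ?_
    calc spow c k * spow c n = spow c (k + n) := (spow_add c k n hk hn).symm
      _ = spow c n := by rw [Nat.add_comm k n]; exact hcyc n hn
  · rintro x ⟨a, ha, rfl⟩ y ⟨b, hb, rfl⟩
    exact ⟨a + b, by omega, (spow_add c a b ha hb).symm⟩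
  · refine ⟨spow c k, ⟨k, hk, rfl⟩, ?_, ?_⟩
    · rintro x ⟨n, hn, rfl⟩
      constructor
      · calc spow c k * spow c n = spow c (k + n) := (spow_add c k n hk hn).symm
          _ = spow c n := by rw [Nat.add_comm k n]; exact hcyc n hn
      · calc spow c n * spow c k = spow c (n + k) := (spow_add c n k hn hk).symm
          _ = spow c n := hcyc n hn
    · rintro x ⟨n, hn, rfl⟩
      refine ⟨spow c (n * (k - 1) + k), ⟨n * (k - 1) + k, by omega, rfl⟩, ?_, ?_⟩
      · have hjj : n + (n * (k - 1) + k) = k + n * k := by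
          obtain ⟨k', rfl⟩ : ∃ k', k = k' + 1 := ⟨k - 1, by omega⟩
          simp only [Nat.add_sub_cancel]
          ring
        calc spow c n * spow c (n * (k - 1) + k)
            = spow c (n + (n * (k - 1) + k)) := (spow_add c n _ hn (by omega)).symm
          _ = spow c (k + n * k) := by rw [hjj]
          _ = spow c k := perT c n k le_rfl
      · have hjj : (n * (k - 1) + k) + n = k + n * k := by
          obtain ⟨k', rfl⟩ : ∃ k', k = k' + 1 := ⟨k - 1, by omega⟩
          simp only [Nat.add_sub_cancel]
          ring
        calc spow c (n * (k - 1) + k) * spow c n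
            = spow c ((n * (k - 1) + k) + n) := (spow_add c _ n (by omega) hn).symm
          _ = spow c (k + n * k) := by rw [hjj]
          _ = spow c k := perT c n k le_rfl
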